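/- arXiv:1108.4726 — 9 statements merged into one kernel-verified Lean document; each statement's English description precedes it below -/
import Mathlib

section
/- For a prime power q = p^s and positive integer a, the degree-one power sum satisfies S_1(a) = (-1)^a / [1]^a · (1 + ∑_{i=1}^{⌊(a-1)/q⌋} binom(a-1-i(q-1), i) (-1)^i [1]^{i(q-1)}), where [1] = t^q - t. -/
/-!
Put `D = x ^ q - x`. Every `u = x + θ` satisfies `u ^ q - u = D` (Frobenius), hence
`u⁻ᵏ = D⁻¹ (u^(q-k) - u^(1-k))`, and the sums `S(k) = ∑_θ (x + θ)⁻ᵏ` obey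
`S(k) = D⁻¹ (S(k - q) - S(k - 1))` for every integer `k`. For `k ≤ 0` these are ordinary power
sums over `F_q`, which vanish except for `∑_θ (x + θ)^(q-1) = -1`; so `S(a) = (-D)⁻ᵃ` for
`1 ≤ a ≤ q`. Past `q`, the recursion becomes, after normalising by `(-D)⁻ᵃ` and using
`(-1)^q = -1`, the Pascal-type recursion `f(m + q) = f(m + q - 1) - D^(q-1) f(m)` satisfied by the
diagonal binomial sums `f(m) = ∑_i C(m - i(q-1), i) (-D^(q-1))^i`.
-/

open Finset

lemma Nat.choose_add_one_sub_mul (m n i : ℕ) :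
    (m + 1 - i * n).choose (i + 1) = (m - i * n).choose (i + 1) + (m - i * n).choose i := by
  rcases le_or_gt (i * n) m with h | h
  · rw [Nat.sub_add_comm h, Nat.choose_succ_succ', add_comm]
  · have hi0 : i ≠ 0 := by rintro rfl; simp at h
    rw [Nat.sub_eq_zero_of_le h, Nat.sub_eq_zero_of_le h.le, Nat.choose_zero_succ,
      Nat.choose_eq_zero_of_lt (Nat.pos_of_ne_zero hi0)]

section DiagonalChooseSum

variable {R : Type*} [CommSemiring R] (n : ℕ) (y : R)

def diagonalChooseSum (m : ℕ) : R :=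
  ∑ i ∈ range (m / (n + 1) + 1), ((m - i * n).choose i : R) * y ^ i

variable {n y}

lemma diagonalChooseSum_eq_sum_range {m N : ℕ} (hN : m / (n + 1) < N) :
    diagonalChooseSum n y m = ∑ i ∈ range N, ((m - i * n).choose i : R) * y ^ i := by
  refine sum_subset (range_subset_range.mpr hN) fun i _ hi => ?_
  have hm : m < i * n + i := by
    simpa [Nat.div_lt_iff_lt_mul n.succ_pos, mul_add_one] using hi
  have hi0 : i ≠ 0 := by rintro rfl; simp at hm
  rw [Nat.choose_eq_zero_of_lt (by omega), Nat.cast_zero, zero_mul]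

lemma diagonalChooseSum_eq_one_add_sum_Icc (m : ℕ) :
    diagonalChooseSum n y m =
      1 + ∑ i ∈ Icc 1 (m / (n + 1)), ((m - i * n).choose i : R) * y ^ i := by
  rw [diagonalChooseSum, range_eq_Ico, sum_eq_sum_Ico_succ_bot (Nat.succ_pos _),
    Nat.succ_eq_add_one, Ico_add_one_right_eq_Icc]
  simp

lemma diagonalChooseSum_of_le {m : ℕ} (hm : m ≤ n) : diagonalChooseSum n y m = 1 := by
  rw [diagonalChooseSum_eq_sum_range (N := 1) (by simp [Nat.div_eq_of_lt, Nat.lt_succ_of_le hm])]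
  simp

lemma diagonalChooseSum_add_succ (m : ℕ) :
    diagonalChooseSum n y (m + n + 1) =
      diagonalChooseSum n y (m + n) + y * diagonalChooseSum n y m := by
  have hN : ∀ k, k / (n + 1) < k + 1 := fun k => (Nat.div_le_self k _).trans_lt k.lt_succ_self
  rw [diagonalChooseSum_eq_sum_range ((hN _).trans (by omega : m + n + 1 + 1 < m + n + 3)),
    diagonalChooseSum_eq_sum_range ((hN _).trans (by omega : m + n + 1 < m + n + 3)),
    diagonalChooseSum_eq_sum_range ((hN _).trans (by omega : m + 1 < m + n + 2)),
    sum_range_succ' _ (m + n + 2), sum_range_succ' _ (m + n + 2), mul_sum,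
    add_right_comm (∑ i ∈ range _, _), ← sum_add_distrib]
  congr 1
  · refine sum_congr rfl fun i _ => ?_
    rw [add_one_mul i n, add_right_comm m n 1, Nat.add_sub_add_right, Nat.add_sub_add_right,
      Nat.choose_add_one_sub_mul]
    push_cast
    ring
  · simp

end DiagonalChooseSum

namespace FiniteField

variable {F : Type*} [Field F] [Fintype F]

lemma sum_pow_card_sub_one : ∑ θ : F, θ ^ (Fintype.card F - 1) = -1 := by
  classical
  have hq : 1 < Fintype.card F := Fintype.one_lt_card
  rw [← add_sum_erase _ _ (mem_univ 0), zero_pow (by omega), zero_add,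
    sum_congr rfl fun θ hθ => pow_card_sub_one_eq_one θ (ne_of_mem_erase hθ),
    sum_const, card_erase_of_mem (mem_univ _), card_univ, nsmul_one,
    Nat.cast_sub Fintype.card_pos, cast_card_eq_zero, Nat.cast_one, zero_sub]

variable {K : Type*} [CommRing K] [Algebra F K]

lemma add_algebraMap_pow_card (x : K) (θ : F) :
    (x + algebraMap F K θ) ^ Fintype.card F = x ^ Fintype.card F + algebraMap F K θ := by
  simpa using map_add (frobeniusAlgHom F K) x (algebraMap F K θ)

lemma sum_add_algebraMap_pow (x : K) (m : ℕ) :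
    ∑ θ : F, (x + algebraMap F K θ) ^ m =
      ∑ k ∈ range (m + 1), x ^ k * algebraMap F K (∑ θ : F, θ ^ (m - k)) * m.choose k := by
  simp_rw [add_pow, map_sum, map_pow, mul_sum, sum_mul]
  exact sum_comm

lemma sum_add_algebraMap_pow_of_lt (x : K) {m : ℕ} (hm : m < Fintype.card F - 1) :
    ∑ θ : F, (x + algebraMap F K θ) ^ m = 0 := by
  rw [sum_add_algebraMap_pow]
  refine sum_eq_zero fun k _ => ?_
  rw [sum_pow_lt_card_sub_one F _ (by omega), map_zero, mul_zero, zero_mul]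

lemma sum_add_algebraMap_pow_card_sub_one (x : K) :
    ∑ θ : F, (x + algebraMap F K θ) ^ (Fintype.card F - 1) = -1 := by
  have hq : 1 < Fintype.card F := Fintype.one_lt_card
  rw [sum_add_algebraMap_pow, sum_range_succ', sum_eq_zero fun k _ => ?_]
  · simp [sum_pow_card_sub_one]
  · rw [sum_pow_lt_card_sub_one F _ (by omega), map_zero, mul_zero, zero_mul]

end FiniteField

section InvPowerSum

variable (F : Type*) [Field F] [Fintype F] {K : Type*} [Field K] [Algebra F K]

/-- The paper's `S₁(k)`, with `t` specialised to `x`. -/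
def invPowerSum (x : K) (k : ℤ) : K :=
  ∑ θ : F, (x + algebraMap F K θ) ^ (-k)

variable {F} {x : K}

lemma invPowerSum_neg_natCast (m : ℕ) :
    invPowerSum F x (-m) = ∑ θ : F, (x + algebraMap F K θ) ^ m := by
  simp [invPowerSum]

lemma invPowerSum_eq_sub (hx : x ^ Fintype.card F ≠ x) (k : ℤ) :
    invPowerSum F x k = (x ^ Fintype.card F - x)⁻¹ *
      (invPowerSum F x (k - Fintype.card F) - invPowerSum F x (k - 1)) := by
  rw [invPowerSum, invPowerSum, invPowerSum, ← sum_sub_distrib, mul_sum]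
  refine sum_congr rfl fun θ _ => ?_
  set u := x + algebraMap F K θ
  have hu : u ^ Fintype.card F - u = x ^ Fintype.card F - x := by
    rw [FiniteField.add_algebraMap_pow_card]; ring
  have hD : x ^ Fintype.card F - x ≠ 0 := sub_ne_zero.mpr hx
  have hu0 : u ≠ 0 := by
    rintro hu0
    rw [hu0, zero_pow Fintype.card_ne_zero, sub_zero] at hu
    exact hD hu.symm
  rw [eq_inv_mul_iff_mul_eq₀ hD, ← hu, show -(k - Fintype.card F) = Fintype.card F + -k by ring,
    show -(k - 1) = 1 + -k by ring, zpow_add₀ hu0, zpow_add₀ hu0, zpow_natCast, zpow_one]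
  ring

lemma invPowerSum_of_le_card (hx : x ^ Fintype.card F ≠ x) {a : ℕ} (ha : 1 ≤ a)
    (haq : a ≤ Fintype.card F) :
    invPowerSum F x a = (-(x ^ Fintype.card F - x)⁻¹) ^ a := by
  have hq : 1 < Fintype.card F := Fintype.one_lt_card
  induction a, ha using Nat.le_induction with
  | base =>
    have h1 : ((1 : ℕ) : ℤ) - Fintype.card F = -((Fintype.card F - 1 : ℕ) : ℤ) := by omega
    have h0 : ((1 : ℕ) : ℤ) - 1 = -((0 : ℕ) : ℤ) := by simp
    rw [invPowerSum_eq_sub hx, h1, h0, invPowerSum_neg_natCast, invPowerSum_neg_natCast,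
      FiniteField.sum_add_algebraMap_pow_card_sub_one,
      FiniteField.sum_add_algebraMap_pow_of_lt x (by omega)]
    ring
  | succ a ha ih =>
    have h1 : ((a + 1 : ℕ) : ℤ) - Fintype.card F = -((Fintype.card F - 1 - a : ℕ) : ℤ) := by
      omega
    have h0 : ((a + 1 : ℕ) : ℤ) - 1 = a := by simp
    rw [invPowerSum_eq_sub hx, h1, h0, invPowerSum_neg_natCast,
      FiniteField.sum_add_algebraMap_pow_of_lt x (by omega), ih (by omega)]
    ring

lemma invPowerSum_natCast_add_one (hx : x ^ Fintype.card F ≠ x) (m : ℕ) :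
    invPowerSum F x (m + 1 : ℕ) = (-(x ^ Fintype.card F - x)⁻¹) ^ (m + 1) *
      diagonalChooseSum (Fintype.card F - 1)
        (-(x ^ Fintype.card F - x) ^ (Fintype.card F - 1)) m := by
  set D := x ^ Fintype.card F - x
  set n := Fintype.card F - 1
  have hq : Fintype.card F = n + 1 := (Nat.sub_add_cancel Fintype.card_pos).symm
  have hsign : (-1 : K) ^ n = 1 := by
    have := congrArg (algebraMap F K) (FiniteField.pow_card (-1 : F))
    rw [map_pow, map_neg, map_one, hq] at this
    linear_combination -this
  have hD : D⁻¹ ^ n * D ^ n = 1 := by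
    rw [← mul_pow, inv_mul_cancel₀ (sub_ne_zero.mpr hx), one_pow]
  induction m using Nat.strong_induction_on with
  | _ m ih =>
    rcases le_or_gt m n with hm | hm
    · rw [diagonalChooseSum_of_le hm, invPowerSum_of_le_card hx (by omega) (by omega), mul_one]
    obtain ⟨k, rfl⟩ : ∃ k, m = k + n + 1 := ⟨m - n - 1, by omega⟩
    have hq' : ((k + n + 1 + 1 : ℕ) : ℤ) - Fintype.card F = (k + 1 : ℕ) := by push_cast; omega
    have h1 : ((k + n + 1 + 1 : ℕ) : ℤ) - 1 = (k + n + 1 : ℕ) := by push_cast; ring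
    rw [invPowerSum_eq_sub hx, hq', h1, ih k (by omega), ih (k + n) (by omega),
      diagonalChooseSum_add_succ]
    linear_combination
      D⁻¹ ^ (k + 2) * (-1) ^ k * diagonalChooseSum n (-D ^ n) k * ((-1) ^ n * hD + hsign)

end InvPowerSum

theorem stmt_0_general (q : ℕ)
    {F : Type} [Field F] [Fintype F] (hF : Fintype.card F = q)
    (a : ℕ) (ha : 1 ≤ a) :
    (∑ θ : F, ((RatFunc.X + RatFunc.C θ) ^ a)⁻¹) =
      (-1 : RatFunc F) ^ a / (RatFunc.X ^ q - RatFunc.X) ^ a *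
        (1 + ∑ i ∈ Finset.Icc 1 ((a - 1) / q),
          ((Nat.choose (a - 1 - i * (q - 1)) i : RatFunc F) * (-1) ^ i *
            (RatFunc.X ^ q - RatFunc.X) ^ (i * (q - 1)))) := by
  subst hF
  obtain ⟨m, rfl⟩ : ∃ m, a = m + 1 := ⟨a - 1, by omega⟩
  have hX : (RatFunc.X : RatFunc F) ^ Fintype.card F ≠ RatFunc.X := by
    rw [Ne, ← sub_eq_zero, ← RatFunc.algebraMap_X, ← map_pow, ← map_sub,
      map_eq_zero_iff _ (IsFractionRing.injective _ _)]
    exact FiniteField.X_pow_card_sub_X_ne_zero F Fintype.one_lt_card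
  have hsum := invPowerSum_natCast_add_one hX m
  rw [invPowerSum, diagonalChooseSum_eq_one_add_sum_Icc,
    Nat.sub_add_cancel Fintype.card_pos] at hsum
  simp only [zpow_neg, zpow_natCast, RatFunc.algebraMap_eq_C] at hsum
  rw [hsum, Nat.add_sub_cancel]
  congr 1
  · rw [neg_pow, inv_pow, div_eq_mul_inv]
  refine congrArg (1 + ·) (Finset.sum_congr rfl fun i _ => ?_)
  rw [neg_pow, ← pow_mul, mul_comm (Fintype.card F - 1), mul_assoc]

/-- For `q = p^s` a prime power, `a ≥ 1`,
`S_1(a) = (-1)^a/[1]^a · (1 + ∑_{i=1}^{⌊(a-1)/q⌋} C(a-1-i(q-1), i)(-1)^i [1]^{i(q-1)})`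
in `F_q(t)`, where `[1] = t^q - t`. -/
theorem stmt_0 (p s q : ℕ) (hp : p.Prime) (hs : 0 < s) (hq : q = p ^ s)
    {F : Type} [Field F] [Fintype F] (hF : Fintype.card F = q)
    (a : ℕ) (ha : 1 ≤ a) :
    (∑ θ : F, ((RatFunc.X + RatFunc.C θ) ^ a)⁻¹) =
      (-1 : RatFunc F) ^ a / (RatFunc.X ^ q - RatFunc.X) ^ a *
        (1 + ∑ i ∈ Finset.Icc 1 ((a - 1) / q),
          ((Nat.choose (a - 1 - i * (q - 1)) i : RatFunc F) * (-1) ^ i *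
            (RatFunc.X ^ q - RatFunc.X) ^ (i * (q - 1)))) :=
  stmt_0_general q hF a ha
end

section
/- For a prime power q and any n ≥ 1, S_1(2q^n - 1) = -[n+1]/[1]^{2q^n}, where [m] = t^{q^m} - t. -/
/-!
Write `P = X ^ q - X = ∏_θ (X - θ)`. Logarithmic differentiation gives
`∑_θ 1/(z - θ) = P'(z)/P(z) = -1/P(z)` and `∑_θ 1/(z - θ)^2 = (P'(z)^2 - P(z) P''(z))/P(z)^2 = 1/P(z)^2`.
By Frobenius, `(t - θ)^(q^n) = T - θ` with `T = t^(q^n)`, so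
`1/(t - θ)^(2q^n - 1) = (t - θ)/(T - θ)^2 = (t - T)/(T - θ)^2 + 1/(T - θ)`.
Summing over `θ` gives `(t - T)/P(T)^2 - 1/P(T) = (t - T^q)/P(T)^2`, and `P(T) = [1]^(q^n)`.
-/

open Polynomial

namespace Polynomial

section CommRing

variable {R ι : Type*} [CommRing R] [DecidableEq ι] (s : Finset ι) (a : ι → R)

theorem derivative_prod_X_sub_C :
    derivative (∏ i ∈ s, (X - C (a i))) = ∑ i ∈ s, ∏ j ∈ s.erase i, (X - C (a j)) := by
  simp [derivative_prod_finset]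

theorem sum_sq_prod_erase_X_sub_C :
    ∑ i ∈ s, (∏ j ∈ s.erase i, (X - C (a j))) ^ 2 =
      derivative (∏ i ∈ s, (X - C (a i))) ^ 2 -
        (∏ i ∈ s, (X - C (a i))) * derivative (derivative (∏ i ∈ s, (X - C (a i)))) := by
  set P := ∏ i ∈ s, (X - C (a i))
  set Q := fun i => ∏ j ∈ s.erase i, (X - C (a j))
  have hPQ : ∀ i ∈ s, P = (X - C (a i)) * Q i := fun i hi =>
    (Finset.mul_prod_erase s _ hi).symm
  have hQ_sq : ∀ i ∈ s, Q i ^ 2 = derivative P * Q i - P * derivative (Q i) := by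
    intro i hi
    have hP' : derivative P = Q i + (X - C (a i)) * derivative (Q i) := by
      rw [hPQ i hi, derivative_mul, derivative_X_sub_C, one_mul]
    rw [hP', hPQ i hi]
    ring
  have hP'' : derivative (derivative P) = ∑ i ∈ s, derivative (Q i) := by
    rw [derivative_prod_X_sub_C, map_sum]
  rw [Finset.sum_congr rfl hQ_sq, Finset.sum_sub_distrib, ← Finset.mul_sum, ← Finset.mul_sum,
    ← hP'', derivative_prod_X_sub_C, sq]

end CommRing

section Field

variable {K ι : Type*} [Field K] {s : Finset ι} {a : ι → K} {z : K}

theorem inv_sub_eq_eval_prod_erase_div [DecidableEq ι] {i : ι} (hi : i ∈ s)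
    (hz : (∏ j ∈ s, (X - C (a j))).eval z ≠ 0) :
    (z - a i)⁻¹ =
      (∏ j ∈ s.erase i, (X - C (a j))).eval z / (∏ j ∈ s, (X - C (a j))).eval z := by
  rw [← Finset.mul_prod_erase s _ hi, eval_mul, eval_sub, eval_X, eval_C] at hz ⊢
  field_simp [left_ne_zero_of_mul hz, right_ne_zero_of_mul hz]

theorem sum_inv_sub_eq (hz : (∏ i ∈ s, (X - C (a i))).eval z ≠ 0) :
    ∑ i ∈ s, (z - a i)⁻¹ =
      (derivative (∏ i ∈ s, (X - C (a i)))).eval z / (∏ i ∈ s, (X - C (a i))).eval z := by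
  classical
  rw [Finset.sum_congr rfl fun i hi => inv_sub_eq_eval_prod_erase_div hi hz, ← Finset.sum_div,
    derivative_prod_X_sub_C, eval_finsetSum]

theorem sum_inv_sub_sq_eq (hz : (∏ i ∈ s, (X - C (a i))).eval z ≠ 0) :
    ∑ i ∈ s, ((z - a i) ^ 2)⁻¹ =
      ((derivative (∏ i ∈ s, (X - C (a i)))).eval z ^ 2 -
        (∏ i ∈ s, (X - C (a i))).eval z *
          (derivative (derivative (∏ i ∈ s, (X - C (a i))))).eval z) /
        (∏ i ∈ s, (X - C (a i))).eval z ^ 2 := by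
  classical
  simp_rw [← inv_pow]
  rw [Finset.sum_congr rfl fun i hi => by rw [inv_sub_eq_eval_prod_erase_div hi hz, div_pow],
    ← Finset.sum_div]
  simp_rw [← eval_pow]
  rw [← eval_finsetSum, sum_sq_prod_erase_X_sub_C, eval_sub, eval_mul, eval_pow]

end Field

end Polynomial

namespace FiniteField

variable {F : Type*} [Field F] [Fintype F]

local notation "q" => Fintype.card F

theorem prod_X_sub_C_eq : ∏ θ : F, (X - C θ) = X ^ q - X := by
  have hmonic : (X ^ q - X : F[X]).Monic :=
    monic_X_pow_sub (by rw [degree_X]; exact_mod_cast Fintype.one_lt_card)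
  have hcard : Multiset.card (X ^ q - X : F[X]).roots =
      (X ^ q - X : F[X]).natDegree := by
    rw [roots_X_pow_card_sub_X, X_pow_card_sub_X_natDegree_eq F Fintype.one_lt_card]
    exact Finset.card_univ
  rw [← prod_multiset_X_sub_C_of_monic_of_roots_card_eq hmonic hcard, roots_X_pow_card_sub_X]
  rfl

theorem sub_pow_card_pow {R : Type*} [CommRing R] [Algebra F R] (n : ℕ) (a b : R) :
    (a - b) ^ q ^ n = a ^ q ^ n - b ^ q ^ n := by
  simpa only [AlgHom.coe_pow, coe_frobeniusAlgHom, pow_iterate]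
    using map_sub (frobeniusAlgHom F R ^ n) a b

variable {K : Type*} [Field K] [Algebra F K] {z : K}

theorem prod_X_sub_C_algebraMap_eq :
    ∏ θ : F, (X - C (algebraMap F K θ)) = X ^ q - X := by
  simpa [Polynomial.map_prod] using congrArg (map (algebraMap F K)) (prod_X_sub_C_eq (F := F))

theorem derivative_X_pow_card_sub_X :
    derivative (X ^ q - X : K[X]) = -1 := by
  have hq : (q : K) = 0 := by
    rw [← map_natCast (algebraMap F K), cast_card_eq_zero, map_zero]
  rw [derivative_sub, derivative_X_pow, derivative_X, hq, C_0, zero_mul, zero_sub]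

theorem sub_algebraMap_ne_zero (hz : z ^ q ≠ z) (θ : F) :
    z - algebraMap F K θ ≠ 0 := by
  rw [sub_ne_zero]
  rintro rfl
  exact hz (by rw [← map_pow, pow_card])

theorem sum_inv_sub_algebraMap (hz : z ^ q ≠ z) :
    ∑ θ : F, (z - algebraMap F K θ)⁻¹ = -(z ^ q - z)⁻¹ := by
  have hz' := sub_ne_zero.mpr hz
  rw [sum_inv_sub_eq (by simpa [prod_X_sub_C_algebraMap_eq] using hz'),
    prod_X_sub_C_algebraMap_eq, derivative_X_pow_card_sub_X]
  simp [neg_div]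

theorem sum_inv_sub_algebraMap_sq (hz : z ^ q ≠ z) :
    ∑ θ : F, ((z - algebraMap F K θ) ^ 2)⁻¹ = ((z ^ q - z) ^ 2)⁻¹ := by
  have hz' := sub_ne_zero.mpr hz
  rw [sum_inv_sub_sq_eq (by simpa [prod_X_sub_C_algebraMap_eq] using hz'),
    prod_X_sub_C_algebraMap_eq, derivative_X_pow_card_sub_X]
  simp

theorem sum_inv_add_algebraMap_pow_two_mul_card_pow_sub_one (hz : z ^ q ≠ z)
    (n : ℕ) :
    ∑ θ : F, ((z + algebraMap F K θ) ^ (2 * q ^ n - 1))⁻¹ =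
      -(z ^ q ^ (n + 1) - z) / (z ^ q - z) ^ (2 * q ^ n) := by
  set w := z ^ q ^ n
  have hd : (z ^ q - z) ^ q ^ n = w ^ q - w := by
    rw [sub_pow_card_pow, ← pow_mul, ← pow_mul, mul_comm]
  have hw : w ^ q ≠ w := sub_ne_zero.mp (hd ▸ pow_ne_zero _ (sub_ne_zero.mpr hz))
  have hterm : ∀ θ : F, ((z - algebraMap F K θ) ^ (2 * q ^ n - 1))⁻¹ =
      (z - w) * ((w - algebraMap F K θ) ^ 2)⁻¹ + (w - algebraMap F K θ)⁻¹ := fun θ => by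
    have hpow : (z - algebraMap F K θ) ^ (2 * q ^ n - 1) * (z - algebraMap F K θ) =
        (w - algebraMap F K θ) ^ 2 := by
      have hq_pow := pow_pos (Fintype.card_pos (α := F)) n
      rw [← pow_succ, Nat.sub_add_cancel (by omega), mul_comm, pow_mul, sub_pow_card_pow,
        ← map_pow, pow_card_pow]
    have hzθ := sub_algebraMap_ne_zero hz θ
    have hwθ := sub_algebraMap_ne_zero hw θ
    field_simp
    rw [← hpow]
    ring
  rw [← Equiv.sum_comp (Equiv.neg F)]
  simp only [Equiv.neg_apply, map_neg, ← sub_eq_add_neg, hterm]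
  rw [Finset.sum_add_distrib, ← Finset.mul_sum, sum_inv_sub_algebraMap hw,
    sum_inv_sub_algebraMap_sq hw, pow_succ q n, pow_mul z, mul_comm 2, pow_mul, hd]
  field_simp
  ring

end FiniteField

theorem stmt_1_general (q : ℕ) {F : Type} [Field F] [Fintype F] (hF : Fintype.card F = q)
    (n : ℕ) :
    (∑ θ : F, ((RatFunc.X + RatFunc.C θ) ^ (2 * q ^ n - 1))⁻¹) =
      -(RatFunc.X ^ q ^ (n + 1) - RatFunc.X) /
        (RatFunc.X ^ q - RatFunc.X) ^ (2 * q ^ n) := by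
  subst hF
  have hX : (RatFunc.X : RatFunc F) ^ Fintype.card F ≠ RatFunc.X := fun h =>
    FiniteField.X_pow_card_sub_X_ne_zero (p := Fintype.card F) F Fintype.one_lt_card <|
      transcendental_iff.mp RatFunc.transcendental_X _ (by simp [h])
  simpa only [RatFunc.algebraMap_eq_C] using
    FiniteField.sum_inv_add_algebraMap_pow_two_mul_card_pow_sub_one hX n

/-- `S_1(2q^n - 1) = -[n+1]/[1]^{2q^n}` where `[m] = t^{q^m} - t`. -/
theorem stmt_1 (p s q : ℕ) (hp : p.Prime) (hs : 0 < s) (hq : q = p ^ s)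
    {F : Type} [Field F] [Fintype F] (hF : Fintype.card F = q)
    (n : ℕ) (hn : 1 ≤ n) :
    (∑ θ : F, ((RatFunc.X + RatFunc.C θ) ^ (2 * q ^ n - 1))⁻¹) =
      -(RatFunc.X ^ q ^ (n + 1) - RatFunc.X) /
        (RatFunc.X ^ q - RatFunc.X) ^ (2 * q ^ n) :=
  stmt_1_general q hF n
end

section
/- Let q be a prime power, n ≥ 1, and 0 ≤ k ≤ 2q^{n-1} - 1. Then in F_p, binom(2q^n - 2 - k(q-1), k)·(-1)^k equals 1 if k ∈ {0, 1, 1+q, 1+q+q^2, ..., 1+q+⋯+q^{n-1}}, and equals 0 otherwise. -/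
/-!
Lucas's theorem in base `q = p ^ s` computes `C(A, k)` modulo `p` digit by digit. Write
`k = q k₁ + k₀` with `k₀ < q`. The last base-`q` digit of `A = 2q^n - 2 - k(q-1)` is `k₀ - 2`
modulo `q`, so the binomial vanishes unless `k₀ ∈ {0, 1}`. For `k₀ = 1` the last digits
contribute `C(q-1, 1) = -1` and `A / q = 2q^(n-1) - 2 - k₁(q-1)` has the same shape, which
drives an induction on `n`; the sign works out because `(-1)^q = -1` in `𝔽_p`. For `k₀ = 0 < k`
one gets `A / q = 2q^(n-1) - 1 - k₁(q-1)`, and the same digit argument shows that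
`C(2q^m - 1 - k(q-1), k)` vanishes modulo `p` for every `k ≠ 0`.
-/

open Finset

namespace Choose

variable {p : ℕ} [Fact p.Prime]

theorem natCast_choose_mul_add_mul_add {a b c d : ℕ} (hb : b < p) (hd : d < p) :
    ((p * a + b).choose (p * c + d) : ZMod p) = b.choose d * a.choose c := by
  have hp : 0 < p := Nat.pos_of_neZero p
  have := (ZMod.intCast_eq_intCast_iff _ _ _).mpr
    (choose_modEq_choose_mod_mul_choose_div (n := p * a + b) (k := p * c + d) (p := p))
  push_cast at this
  rwa [Nat.mul_add_mod, Nat.mul_add_mod, Nat.mod_eq_of_lt hb, Nat.mod_eq_of_lt hd,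
    Nat.mul_add_div hp, Nat.mul_add_div hp, Nat.div_eq_of_lt hb, Nat.div_eq_of_lt hd,
    add_zero, add_zero] at this

theorem natCast_choose_pow_mul_add_pow_mul_add (s : ℕ) {a b c d : ℕ} (hb : b < p ^ s)
    (hd : d < p ^ s) :
    ((p ^ s * a + b).choose (p ^ s * c + d) : ZMod p) = b.choose d * a.choose c := by
  induction s generalizing a b c d with
  | zero =>
    obtain rfl : b = 0 := by simpa using hb
    obtain rfl : d = 0 := by simpa using hd
    simp
  | succ s ih =>
    have hp : 0 < p := Nat.pos_of_neZero p
    have hb' : b / p < p ^ s := Nat.div_lt_of_lt_mul (by rwa [mul_comm, ← pow_succ])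
    have hd' : d / p < p ^ s := Nat.div_lt_of_lt_mul (by rwa [mul_comm, ← pow_succ])
    have split (x y : ℕ) : p ^ (s + 1) * x + y = p * (p ^ s * x + y / p) + y % p := by
      rw [pow_succ', mul_add, mul_assoc, add_assoc, Nat.div_add_mod]
    rw [split a b, split c d, natCast_choose_mul_add_mul_add (Nat.mod_lt _ hp)
      (Nat.mod_lt _ hp), ih hb' hd', ← mul_assoc, ← natCast_choose_mul_add_mul_add
      (Nat.mod_lt _ hp) (Nat.mod_lt _ hp), Nat.div_add_mod, Nat.div_add_mod]

theorem natCast_choose_eq_choose_mod_mul_choose_div (s n k : ℕ) :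
    (n.choose k : ZMod p) =
      (n % p ^ s).choose (k % p ^ s) * (n / p ^ s).choose (k / p ^ s) := by
  have hq : 0 < p ^ s := pow_pos (Nat.pos_of_neZero p) s
  conv_lhs => rw [← Nat.div_add_mod n (p ^ s), ← Nat.div_add_mod k (p ^ s)]
  exact natCast_choose_pow_mul_add_pow_mul_add s (Nat.mod_lt _ hq) (Nat.mod_lt _ hq)

end Choose

theorem Nat.mul_add_eq_mul_add_cases {q x y u v : ℕ} (hu : u < 2 * q) (hv : v < q)
    (h : q * x + u = q * y + v) : (x = y ∧ u = v) ∨ (y = x + 1 ∧ u = v + q) := by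
  rcases lt_trichotomy x y with hxy | rfl | hxy
  · obtain ⟨t, rfl⟩ := Nat.exists_eq_add_of_lt hxy
    have ht : q * t < q := by rw [mul_add, mul_add] at h; omega
    obtain rfl : t = 0 := by
      by_contra ht0
      exact (Nat.le_mul_of_pos_right q (Nat.pos_of_ne_zero ht0)).not_gt ht
    rw [add_zero, mul_add, mul_one] at h
    exact Or.inr ⟨rfl, by omega⟩
  · omega
  · obtain ⟨t, rfl⟩ := Nat.exists_eq_add_of_lt hxy
    rw [mul_add, mul_add] at h
    omega

/-- Subtracting `c + k(q-1)` from a multiple of `q`: either the last digit of `A` is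
`k % q - c`, or there is a borrow and `A / q` satisfies a relation of the same shape with `c`
replaced by `k % q + 1`. -/
theorem Nat.mod_cases_of_add_mul_add_eq_mul_add {q A k c M : ℕ} (hq : 0 < q) (hc : c ≤ q)
    (h : A + q * k + c = q * M + k) :
    A % q + c = k % q ∨
      (A % q + c = k % q + q ∧ A / q + q * (k / q) + (k % q + 1) = M + k / q) := by
  have hA := Nat.div_add_mod A q
  have hk := Nat.div_add_mod k q
  have key : q * (A / q + q * (k / q) + k % q) + (A % q + c) = q * (M + k / q) + k % q := by
    rw [← hA, ← hk] at h
    linear_combination h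
  have := Nat.mod_lt A hq
  rcases Nat.mul_add_eq_mul_add_cases (by omega) (Nat.mod_lt k hq) key with
    ⟨-, hlow⟩ | ⟨hhigh, hlow⟩
  · exact Or.inl hlow
  · exact Or.inr ⟨hlow, by omega⟩

theorem exists_le_succ_eq_sum_range_pow_iff {q n k : ℕ} (hq : 2 ≤ q) :
    (∃ i ≤ n + 1, k = ∑ j ∈ range i, q ^ j) ↔
      k = 0 ∨ (k % q = 1 ∧ ∃ i ≤ n, k / q = ∑ j ∈ range i, q ^ j) := by
  have hsucc (i : ℕ) : ∑ j ∈ range (i + 1), q ^ j = q * ∑ j ∈ range i, q ^ j + 1 := by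
    rw [sum_range_succ', mul_sum]; simp [pow_succ']
  constructor
  · rintro ⟨_ | i, hi, rfl⟩
    · simp
    · rw [hsucc, Nat.mul_add_mod, Nat.mul_add_div (by omega), Nat.mod_eq_of_lt (by omega)]
      exact Or.inr ⟨rfl, i, by omega, by rw [Nat.div_eq_of_lt (by omega), add_zero]⟩
  · rintro (rfl | ⟨hk, i, hi, hS⟩)
    · exact ⟨0, by omega, by simp⟩
    · refine ⟨i + 1, by omega, ?_⟩
      rw [hsucc, ← hS, ← hk, Nat.div_add_mod]

theorem zero_or_exists_lt_eq_sum_range_succ_iff {M : Type*} [AddCommMonoid M] (f : ℕ → M)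
    (n : ℕ) (x : M) :
    (x = 0 ∨ ∃ i < n, x = ∑ j ∈ range (i + 1), f j) ↔
      ∃ i ≤ n, x = ∑ j ∈ range i, f j := by
  constructor
  · rintro (rfl | ⟨i, hi, rfl⟩)
    · exact ⟨0, Nat.zero_le n, by simp⟩
    · exact ⟨i + 1, hi, rfl⟩
  · rintro ⟨_ | i, hi, rfl⟩
    · simp
    · exact Or.inr ⟨i, hi, rfl⟩

section PrimePower

variable {p s q : ℕ} [hp : Fact p.Prime]

/- The relation `A + q * k + c = 2 * q ^ (m + 1) + k` encodes `A = 2q^(m+1) - c - k(q-1)`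
without truncated subtraction. -/

theorem natCast_choose_eq_zero_of_add_mul_add_one (hq : q = p ^ s) (hs : s ≠ 0) (m : ℕ)
    {A k : ℕ} (hk₀ : k ≠ 0) (hk : k < 2 * q ^ m) (h : A + q * k + 1 = 2 * q ^ (m + 1) + k) :
    (A.choose k : ZMod p) = 0 := by
  have hq₂ : 2 ≤ q := hq ▸ Nat.one_lt_pow hs hp.out.one_lt
  induction m generalizing A k with
  | zero =>
    rw [pow_zero, mul_one] at hk
    rw [zero_add, pow_one] at h
    obtain rfl : k = 1 := by omega
    obtain rfl : A = q := by omega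
    rw [Nat.choose_one_right, hq, Nat.cast_pow, ZMod.natCast_self, zero_pow hs]
  | succ m ih =>
    have hM : 2 * q ^ (m + 1) = q * (2 * q ^ m) := by ring
    rw [Choose.natCast_choose_eq_choose_mod_mul_choose_div s, ← hq]
    rcases Nat.mod_cases_of_add_mul_add_eq_mul_add (M := 2 * q ^ (m + 1)) (by omega)
      (by omega : 1 ≤ q) (h.trans (by ring)) with hlow | ⟨hlow, hhigh⟩
    · rw [Nat.choose_eq_zero_of_lt (by omega), Nat.cast_zero, zero_mul]
    · have hk₀q : k % q = 0 := by have := Nat.mod_lt A (show 0 < q by omega); omega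
      have hk₁₀ : k / q ≠ 0 := by
        have hkq := Nat.div_add_mod k q
        intro h0; rw [h0, hk₀q] at hkq; omega
      rw [hk₀q] at hhigh
      rw [ih hk₁₀ (Nat.div_lt_of_lt_mul (hM ▸ hk)) hhigh, mul_zero]

theorem natCast_choose_mul_neg_one_pow_of_add_mul_add_two (hq : q = p ^ s) (hs : s ≠ 0)
    (m : ℕ) {A k : ℕ} (hk : k < 2 * q ^ m) (h : A + q * k + 2 = 2 * q ^ (m + 1) + k) :
    (A.choose k : ZMod p) * (-1) ^ k =
      if ∃ i ≤ m + 1, k = ∑ j ∈ range i, q ^ j then 1 else 0 := by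
  have hq₂ : 2 ≤ q := hq ▸ Nat.one_lt_pow hs hp.out.one_lt
  have hq₀ : (q : ZMod p) = 0 := by rw [hq, Nat.cast_pow, ZMod.natCast_self, zero_pow hs]
  have hzero (n A : ℕ) : (A.choose 0 : ZMod p) * (-1) ^ 0 =
      if ∃ i ≤ n, 0 = ∑ j ∈ range i, q ^ j then 1 else 0 := by
    rw [if_pos ⟨0, Nat.zero_le _, (sum_range_zero _).symm⟩]
    simp
  induction m generalizing A k with
  | zero =>
    rcases eq_or_ne k 0 with rfl | hk₀
    · exact hzero _ A
    rw [pow_zero, mul_one] at hk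
    rw [zero_add, pow_one] at h
    obtain rfl : k = 1 := by omega
    have hA : (A : ZMod p) = -1 :=
      eq_neg_of_add_eq_zero_left (by exact_mod_cast (show A + 1 = q by omega) ▸ hq₀)
    rw [if_pos ⟨1, le_rfl, by simp⟩, Nat.choose_one_right, hA]
    ring
  | succ m ih =>
    rcases eq_or_ne k 0 with rfl | hk₀
    · exact hzero _ A
    have hM : 2 * q ^ (m + 1) = q * (2 * q ^ m) := by ring
    have hAq := Nat.mod_lt A (show 0 < q by omega)
    have hkq := Nat.div_add_mod k q
    have hS : (∃ i ≤ m + 1 + 1, k = ∑ j ∈ range i, q ^ j) ↔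
        k % q = 1 ∧ ∃ i ≤ m + 1, k / q = ∑ j ∈ range i, q ^ j := by
      rw [exists_le_succ_eq_sum_range_pow_iff hq₂, or_iff_right hk₀]
    rw [Choose.natCast_choose_eq_choose_mod_mul_choose_div s, ← hq]
    rcases Nat.mod_cases_of_add_mul_add_eq_mul_add (M := 2 * q ^ (m + 1)) (by omega)
      (by omega : 2 ≤ q) (h.trans (by ring)) with hlow | ⟨hlow, hhigh⟩
    · rw [Nat.choose_eq_zero_of_lt (by omega), if_neg fun hkS => by have := (hS.1 hkS).1; omega]
      simp
    rcases (show k % q = 0 ∨ k % q = 1 by omega) with hk₀q | hk₁q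
    · have hk₁₀ : k / q ≠ 0 := by
        intro h0; rw [h0, hk₀q] at hkq; omega
      rw [hk₀q] at hhigh
      rw [natCast_choose_eq_zero_of_add_mul_add_one hq hs m hk₁₀
        (Nat.div_lt_of_lt_mul (hM ▸ hk)) hhigh, if_neg fun hkS => by have := (hS.1 hkS).1; omega]
      simp
    · rw [hk₁q] at hhigh hkq
      have hA : ((A % q : ℕ) : ZMod p) = -1 :=
        eq_neg_of_add_eq_zero_left (by exact_mod_cast (show A % q + 1 = q by omega) ▸ hq₀)
      have hsign : (-1 : ZMod p) ^ k = (-1) ^ (k / q) * (-1) := by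
        have hneg_one_pow_q : (-1 : ZMod p) ^ q = -1 := hq ▸ ZMod.pow_card_pow _
        conv_lhs => rw [← hkq]
        rw [pow_succ, pow_mul, hneg_one_pow_q]
      rw [hk₁q, Nat.choose_one_right, hA, hsign,
        if_congr (hS.trans (and_iff_right hk₁q)) rfl rfl,
        ← ih (Nat.div_lt_of_lt_mul (hM ▸ hk)) hhigh]
      ring

end PrimePower

/-- For `q = p^s`, `n ≥ 1`, `0 ≤ k ≤ 2q^{n-1} - 1`, in `F_p`:
`C(2q^n - 2 - k(q-1), k)·(-1)^k = 1` if `k ∈ {0, 1, 1+q, …, 1+q+⋯+q^{n-1}}`, else `0`. -/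
theorem stmt_2 (p s q : ℕ) (hp : p.Prime) (hs : 0 < s) (hq : q = p ^ s)
    (n k : ℕ) (hn : 1 ≤ n) (hk : k ≤ 2 * q ^ (n - 1) - 1) :
    ((Nat.choose (2 * q ^ n - 2 - k * (q - 1)) k : ZMod p) * (-1) ^ k) =
      (if k = 0 ∨ ∃ i < n, k = ∑ j ∈ Finset.range (i + 1), q ^ j then 1 else 0) := by
  have : Fact p.Prime := ⟨hp⟩
  obtain ⟨m, rfl⟩ : ∃ m, n = m + 1 := ⟨n - 1, by omega⟩
  rw [Nat.add_sub_cancel] at hk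
  have hq₁ : 1 ≤ q := hq ▸ Nat.one_le_pow _ _ hp.pos
  have hqm : 1 ≤ q ^ m := Nat.one_le_pow _ _ hq₁
  have hk' : k + 1 ≤ 2 * q ^ m := by omega
  have hqk : k * (q - 1) + k = q * k := by
    rw [Nat.mul_sub_one, Nat.sub_add_cancel (Nat.le_mul_of_pos_right k hq₁), mul_comm]
  have hbound : k * (q - 1) + 2 ≤ 2 * q ^ (m + 1) := by
    have := Nat.mul_le_mul_right (q - 1) hk'
    rw [pow_succ]
    nlinarith
  rw [natCast_choose_mul_neg_one_pow_of_add_mul_add_two hq hs.ne' m (by omega) (by omega),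
    if_congr (zero_or_exists_lt_eq_sum_range_succ_iff _ _ _) rfl rfl]
end

section
/- Let q be a prime power, n ≥ 1, and N = q^{n+1} - 2q^n + 1. Then ∑_{θ∈F_q} (t+θ)^N = -1 in F_q[t]. -/
/-!
Since `N = q ^ n * (q - 2) + 1`, Frobenius gives
`(t + θ) ^ N = (t ^ q ^ n + θ) ^ (q - 2) * (t + θ)`, a monic polynomial of degree `q - 1` in `θ`
with coefficients in `F_q[t]`. Summing such a polynomial over `θ ∈ F_q` leaves only minus its
coefficient of `θ ^ (q - 1)`, because `∑ θ ^ i` vanishes for `i < q - 1` and equals `-1` for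
`i = q - 1`.
-/

open Polynomial

namespace FiniteField

variable {K : Type*} [Field K] [Fintype K]

local notation "q" => Fintype.card K

theorem sum_pow_card_sub_one_s3 : ∑ x : K, x ^ (q - 1) = -1 := by
  classical
  have hq : q - 1 ≠ 0 := Nat.sub_ne_zero_of_lt Fintype.one_lt_card
  rw [Fintype.sum_eq_add_sum_compl 0, zero_pow hq, zero_add,
    Finset.sum_congr rfl fun x hx => pow_card_sub_one_eq_one x (by simpa using hx)]
  simp [Finset.card_compl, Nat.cast_sub Fintype.card_pos]

theorem sum_pow_of_le_card_sub_one {i : ℕ} (hi : i ≤ q - 1) :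
    ∑ x : K, x ^ i = if i = q - 1 then -1 else 0 := by
  split_ifs with h
  · rw [h, sum_pow_card_sub_one_s3]
  · exact sum_pow_lt_card_sub_one K i (lt_of_le_of_ne hi h)

variable {A : Type*} [CommRing A] [Algebra K A]

theorem sum_eval_algebraMap_of_natDegree_le {P : A[X]} (hP : P.natDegree ≤ q - 1) :
    ∑ x : K, P.eval (algebraMap K A x) = -P.coeff (q - 1) := by
  have hq : q - 1 + 1 = q := Nat.sub_add_cancel Fintype.card_pos
  simp_rw [eval_eq_sum_range' (hq ▸ Nat.lt_succ_of_le hP), Finset.sum_comm (γ := K), ← map_pow,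
    ← Finset.mul_sum, ← map_sum]
  rw [Finset.sum_congr rfl fun i hi => by
    rw [sum_pow_of_le_card_sub_one (Nat.lt_succ_iff.mp (Finset.mem_range.mp hi))]]
  simp [apply_ite (algebraMap K A), Finset.sum_ite_eq']

theorem sum_add_algebraMap_pow_card_sub_two_mul (a b : A) :
    ∑ x : K, (a + algebraMap K A x) ^ (q - 2) * (b + algebraMap K A x) = -1 := by
  have hq : q - 2 + 1 = q - 1 := by have := Fintype.one_lt_card (α := K); omega
  have hlin (c : A) : (X + C c).natDegree ≤ 1 := natDegree_add_C.trans_le natDegree_X_le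
  have hdeg : ((X + C a) ^ (q - 2)).natDegree ≤ q - 2 :=
    (natDegree_pow_le_of_le _ (hlin a)).trans_eq (mul_one _)
  have hP := sum_eval_algebraMap_of_natDegree_le (K := K) (P := (X + C a) ^ (q - 2) * (X + C b))
    (hq ▸ natDegree_mul_le_of_le hdeg (hlin b))
  rw [← hq, coeff_mul_add_eq_of_natDegree_le hdeg (hlin b)] at hP
  simpa [coeff_X_add_C_pow, add_comm] using hP

theorem X_add_C_pow_card_pow (a : K) (n : ℕ) : (X + C a) ^ q ^ n = X ^ q ^ n + C a := by
  induction n with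
  | zero => simp
  | succ n ih => rw [pow_succ, pow_mul, ih, ← expand_card]; simp [← pow_mul, mul_comm]

end FiniteField

theorem stmt_3_general (q : ℕ)
    {F : Type} [Field F] [Fintype F] (hF : Fintype.card F = q)
    (n : ℕ) :
    (∑ θ : F, (X + C θ) ^ (q ^ (n + 1) - 2 * q ^ n + 1)) = (-1 : F[X]) := by
  have hN : q ^ (n + 1) - 2 * q ^ n + 1 = q ^ n * (q - 2) + 1 := by
    rw [pow_succ, Nat.mul_sub, Nat.mul_comm (q ^ n) 2]
  have hfrob (θ : F) : (X + C θ) ^ (q ^ n * (q - 2) + 1) =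
      (X ^ q ^ n + C θ) ^ (q - 2) * (X + C θ) := by
    rw [pow_succ, pow_mul, ← hF, FiniteField.X_add_C_pow_card_pow]
  rw [hN, Finset.sum_congr rfl fun θ _ => hfrob θ]
  simpa only [C_eq_algebraMap, hF] using
    FiniteField.sum_add_algebraMap_pow_card_sub_two_mul (K := F) _ X

/-- For `N = q^{n+1} - 2q^n + 1`, `∑_{θ∈F_q} (t+θ)^N = -1` in `F_q[t]`. -/
theorem stmt_3 (p s q : ℕ) (hp : p.Prime) (hs : 0 < s) (hq : q = p ^ s)
    {F : Type} [Field F] [Fintype F] (hF : Fintype.card F = q)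
    (n : ℕ) (hn : 1 ≤ n) :
    (∑ θ : F, (X + C θ) ^ (q ^ (n + 1) - 2 * q ^ n + 1)) = (-1 : F[X]) :=
  stmt_3_general q hF n
end

section
/- Let q be a prime power, n ≥ 1, and N = q^{n+1} - 2q^n + 1. For every integer l with 0 < l < N/(q-1), the binomial coefficient binom(N, l(q-1)) vanishes modulo p. -/
/-! Since `q ^ n` is a power of `p`, Lucas's theorem holds in base `q ^ n`. In that base
`N = (q - 2) * q ^ n + 1` has digits `q - 2` and `1`, so `C(N, k) ≢ 0 (mod p)` forces
`k = m * q ^ n + r` with `m ≤ q - 2` and `r ≤ 1`. As `q ^ n ≡ 1 (mod q - 1)`, a multiple `k` of `q - 1`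
then has `q - 1 ∣ m + r ≤ q - 1`, which leaves only `k = 0` and `k = N`. -/

open Nat

theorem Nat.eq_zero_or_eq_of_dvd_of_div_lt_of_mod_le_one {d b k : ℕ} (hb : b ≡ 1 [MOD d])
    (hdiv : k / b < d) (hmod : k % b ≤ 1) (hdvd : d ∣ k) : k = 0 ∨ k = b * (d - 1) + 1 := by
  have hk : k / b * b + k % b = k := Nat.div_add_mod' k b
  have hsum : d ∣ k / b + k % b := by
    have : k / b * b + k % b ≡ k / b * 1 + k % b [MOD d] := (hb.mul_left _).add_right _
    rw [hk, mul_one] at this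
    exact Nat.modEq_zero_iff_dvd.mp (this.symm.trans (Nat.modEq_zero_iff_dvd.mpr hdvd))
  rcases Nat.eq_zero_or_pos (k / b + k % b) with hzero | hpos
  · left
    rw [← hk, Nat.eq_zero_of_add_eq_zero_left hzero, Nat.eq_zero_of_add_eq_zero_right hzero,
      zero_mul]
  · have hle := Nat.le_of_dvd hpos hsum
    right
    rw [← hk, show k / b = d - 1 by omega, show k % b = 1 by omega, mul_comm]

namespace Choose

variable {n k p : ℕ} [hp : Fact p.Prime]

theorem choose_modEq_choose_mod_mul_choose_div_pow (e : ℕ) :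
    choose n k ≡ choose (n % p ^ e) (k % p ^ e) * choose (n / p ^ e) (k / p ^ e) [ZMOD p] := by
  have hdigit : ∀ m, ∀ i ∈ Finset.range e, m % p ^ e / p ^ i % p = m / p ^ i % p := by
    intro m i hi
    have hie := Finset.mem_range.mp hi
    rw [show p ^ e = p ^ i * p ^ (e - i) by rw [← pow_add, Nat.add_sub_cancel' hie.le],
      Nat.mod_mul_right_div_self]
    exact Nat.mod_mod_of_dvd _ (dvd_pow_self p (by omega))
  have hlow := choose_modEq_choose_mul_prod_range_choose (n := n % p ^ e) (k := k % p ^ e) (p := p) e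
  rw [Nat.div_eq_of_lt (Nat.mod_lt _ (pow_pos hp.out.pos e)),
    Nat.div_eq_of_lt (Nat.mod_lt _ (pow_pos hp.out.pos e)), choose_self, cast_one, one_mul,
    Finset.prod_congr rfl fun i hi => by rw [hdigit n i hi, hdigit k i hi]] at hlow
  calc (choose n k : ℤ) ≡ choose (n / p ^ e) (k / p ^ e) *
        ∏ i ∈ Finset.range e, choose (n / p ^ i % p) (k / p ^ i % p) [ZMOD p] :=
        choose_modEq_choose_mul_prod_range_choose (p := p) e
    _ ≡ choose (n / p ^ e) (k / p ^ e) * choose (n % p ^ e) (k % p ^ e) [ZMOD p] :=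
        hlow.symm.mul_left _
    _ = _ := mul_comm _ _

theorem div_le_and_mod_le_one_of_choose_pow_mul_add_one_ne_zero {e a : ℕ} (he : 0 < e)
    (h : (choose (p ^ e * a + 1) k : ZMod p) ≠ 0) : k / p ^ e ≤ a ∧ k % p ^ e ≤ 1 := by
  have hb : 1 < p ^ e := Nat.one_lt_pow he.ne' hp.out.one_lt
  have hlucas := (ZMod.intCast_eq_intCast_iff _ _ _).mpr
    (choose_modEq_choose_mod_mul_choose_div_pow (n := p ^ e * a + 1) (k := k) (p := p) e)
  rw [Nat.mul_add_mod, Nat.mod_eq_of_lt hb, Nat.mul_add_div (by omega), Nat.div_eq_of_lt hb,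
    add_zero] at hlucas
  push_cast at hlucas
  rw [hlucas] at h
  obtain ⟨hlow, hhigh⟩ := mul_ne_zero_iff.mp h
  exact ⟨not_lt.mp fun hlt => hhigh (by rw [choose_eq_zero_of_lt hlt, cast_zero]),
    not_lt.mp fun hlt => hlow (by rw [choose_eq_zero_of_lt hlt, cast_zero])⟩

end Choose

/-- For `N = q^{n+1} - 2q^n + 1` and `0 < l < N/(q-1)`,
`C(N, l(q-1)) ≡ 0 (mod p)`. -/
theorem stmt_4 (p s q : ℕ) (hp : p.Prime) (hs : 0 < s) (hq : q = p ^ s)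
    (n : ℕ) (hn : 1 ≤ n) (l : ℕ) (hl : 0 < l)
    (hl2 : l < (q ^ (n + 1) - 2 * q ^ n + 1) / (q - 1)) :
    ((Nat.choose (q ^ (n + 1) - 2 * q ^ n + 1) (l * (q - 1)) : ZMod p)) = 0 := by
  have : Fact p.Prime := ⟨hp⟩
  have hq2 : 2 ≤ q := hq ▸ hp.two_le.trans (Nat.le_self_pow hs.ne' p)
  have hN : q ^ (n + 1) - 2 * q ^ n + 1 = p ^ (s * n) * (q - 2) + 1 := by
    rw [pow_mul, ← hq, pow_succ, mul_comm 2, ← Nat.mul_sub]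
  have hb : p ^ (s * n) ≡ 1 [MOD q - 1] := by
    simpa [pow_mul, ← hq] using (Nat.modEq_sub (by omega : 1 ≤ q)).pow n
  rw [hN] at hl2 ⊢
  by_contra h
  obtain ⟨hdiv, hmod⟩ :=
    Choose.div_le_and_mod_le_one_of_choose_pow_mul_add_one_ne_zero (Nat.mul_pos hs hn) h
  rcases Nat.eq_zero_or_eq_of_dvd_of_div_lt_of_mod_le_one hb (by omega) hmod (dvd_mul_left _ l)
    with hk | hk
  · exact (Nat.mul_pos hl (by omega)).ne' hk
  · rw [show q - 1 - 1 = q - 2 by omega] at hk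
    rw [← hk, Nat.mul_div_cancel l (by omega)] at hl2
    exact lt_irrefl l hl2
end

section
/- For a prime power q and n ≥ 1, the identity S_1(q^n)·S_1(q^n - 1) = S_1(2q^n - 1) - S_1(q^n) holds in F_q(t). -/
/-!
Write `a_θ = (t + θ)⁻¹` and `m = q ^ n`. Since `(t + η)^m = (t + θ)^m + (η - θ)` by Frobenius, for
`θ ≠ η` the product `a_θ^(m-1) a_η^m` has the partial-fraction expansion
`(η - θ)⁻¹ (a_θ^(m-1) - a_η^(m-1)) + a_η^m`. Expanding `S_1(m) S_1(m-1)` as a double sum, the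
partial-fraction terms cancel after summing over `θ` and `η`, the terms `a_η^m` contribute
`q S_1(m) = 0`, and the diagonal contributes `S_1(2m-1) - S_1(m)`.
-/

open Finset

theorem add_algebraMap_pow_card_pow {F K : Type*} [Field F] [Fintype F] [Field K] [Algebra F K]
    (n : ℕ) (y : K) (c : F) :
    (y + algebraMap F K c) ^ Fintype.card F ^ n = y ^ Fintype.card F ^ n + algebraMap F K c := by
  obtain ⟨p, hchar, k, hp, hcard⟩ := FiniteField.card' F
  have := Fact.mk hp
  have : CharP K p := (Algebra.charP_iff F K p).mp hchar
  conv_rhs => rw [← FiniteField.pow_card_pow n c, map_pow]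
  rw [hcard, ← pow_mul, add_pow_char_pow]

theorem RatFunc.X_add_C_ne_zero {F : Type*} [Field F] (θ : F) : RatFunc.X + RatFunc.C θ ≠ 0 := by
  rw [← RatFunc.algebraMap_X, ← RatFunc.algebraMap_C, ← map_add]
  exact RatFunc.algebraMap_ne_zero (Polynomial.X_add_C_ne_zero θ)

theorem inv_pow_mul_inv_pow_succ_eq {K : Type*} [Field K] {u v : K} (k : ℕ)
    (hu : u ≠ 0) (hv : v ≠ 0) (huv : u ≠ v) (hfrob : v ^ (k + 1) = u ^ (k + 1) + (v - u)) :
    (u ^ k)⁻¹ * (v ^ (k + 1))⁻¹ = (v - u)⁻¹ * ((u ^ k)⁻¹ - (v ^ k)⁻¹) + (v ^ (k + 1))⁻¹ := by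
  have hvu : v - u ≠ 0 := sub_ne_zero.mpr huv.symm
  field_simp
  linear_combination (-v ^ k) * hfrob

theorem sum_sum_mul_sub_eq_zero {G R : Type*} [AddCommGroup G] [Fintype G] [CommRing R]
    (h g : G → R) : ∑ a, ∑ b, h (b - a) * (g a - g b) = 0 := by
  have hrow : ∀ a, ∑ b, h (b - a) = ∑ d, h d := fun a =>
    Fintype.sum_equiv (Equiv.subRight a) _ _ fun _ => rfl
  have hcol : ∀ b, ∑ a, h (b - a) = ∑ d, h d := fun b =>
    Fintype.sum_equiv (Equiv.subLeft b) _ _ fun _ => rfl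
  simp only [mul_sub, sum_sub_distrib]
  rw [sum_comm (f := fun a b => h (b - a) * g b)]
  simp only [← sum_mul, hrow, hcol, sub_self]

section

variable {F K : Type*} [Field F] [Fintype F] [Field K] [Algebra F K] {x : K} {k : ℕ}

theorem inv_pow_mul_sum_inv_pow_succ (hx : ∀ θ : F, x + algebraMap F K θ ≠ 0)
    (hfrob : ∀ (y : K) (c : F), (y + algebraMap F K c) ^ (k + 1) = y ^ (k + 1) + algebraMap F K c)
    (θ : F) :
    ((x + algebraMap F K θ) ^ k)⁻¹ * ∑ η : F, ((x + algebraMap F K η) ^ (k + 1))⁻¹ =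
      ((x + algebraMap F K θ) ^ (2 * k + 1))⁻¹ - ((x + algebraMap F K θ) ^ (k + 1))⁻¹ +
        ∑ η : F, ((x + algebraMap F K η) ^ (k + 1))⁻¹ +
        ∑ η : F, algebraMap F K (η - θ)⁻¹ *
          (((x + algebraMap F K θ) ^ k)⁻¹ - ((x + algebraMap F K η) ^ k)⁻¹) := by
  set a : F → ℕ → K := fun η j => ((x + algebraMap F K η) ^ j)⁻¹ with ha
  have hoff : ∀ η ≠ θ, a θ k * a η (k + 1) =
      algebraMap F K (η - θ)⁻¹ * (a θ k - a η k) + a η (k + 1) := by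
    intro η hη
    have hdiff : x + algebraMap F K η - (x + algebraMap F K θ) = algebraMap F K (η - θ) := by
      rw [map_sub]; ring
    rw [map_inv₀, ← hdiff]
    refine inv_pow_mul_inv_pow_succ_eq k (hx θ) (hx η) ?_ ?_
    · simpa using hη.symm
    · rw [hdiff, ← hfrob]; congr 1; rw [map_sub]; ring
  -- Only the diagonal term survives, and there the junk value `(θ - θ)⁻¹ = 0` kills the
  -- partial-fraction part.
  have hrow : ∑ η, (a θ k * a η (k + 1) -
      (algebraMap F K (η - θ)⁻¹ * (a θ k - a η k) + a η (k + 1))) =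
      a θ (2 * k + 1) - a θ (k + 1) := by
    rw [sum_eq_single θ (fun η _ hη => by rw [hoff η hη, sub_self]) (by simp)]
    simp only [ha, sub_self, inv_zero, map_zero, zero_mul, zero_add]
    rw [← mul_inv, ← pow_add]; ring_nf
  rw [sum_sub_distrib, sum_add_distrib, ← mul_sum] at hrow
  linear_combination hrow

theorem sum_inv_pow_succ_mul_sum_inv_pow (hx : ∀ θ : F, x + algebraMap F K θ ≠ 0)
    (hfrob : ∀ (y : K) (c : F), (y + algebraMap F K c) ^ (k + 1) = y ^ (k + 1) + algebraMap F K c) :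
    (∑ θ : F, ((x + algebraMap F K θ) ^ (k + 1))⁻¹) * ∑ θ : F, ((x + algebraMap F K θ) ^ k)⁻¹ =
      ∑ θ : F, ((x + algebraMap F K θ) ^ (2 * k + 1))⁻¹ -
        ∑ θ : F, ((x + algebraMap F K θ) ^ (k + 1))⁻¹ := by
  have hcard : (Fintype.card F : K) = 0 := by
    rw [← map_natCast (algebraMap F K), FiniteField.cast_card_eq_zero, map_zero]
  rw [mul_comm, sum_mul]
  simp only [inv_pow_mul_sum_inv_pow_succ hx hfrob]
  rw [sum_add_distrib, sum_add_distrib, sum_sub_distrib, sum_const, card_univ, nsmul_eq_mul,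
    hcard, sum_sum_mul_sub_eq_zero (fun d => algebraMap F K d⁻¹)]
  ring

end

theorem stmt_5_general (q : ℕ)
    {F : Type} [Field F] [Fintype F] (hF : Fintype.card F = q)
    (n : ℕ) :
    (∑ θ : F, ((RatFunc.X + RatFunc.C θ) ^ (q ^ n))⁻¹) *
        (∑ θ : F, ((RatFunc.X + RatFunc.C θ) ^ (q ^ n - 1))⁻¹) =
      (∑ θ : F, ((RatFunc.X + RatFunc.C θ) ^ (2 * q ^ n - 1))⁻¹) -
        (∑ θ : F, ((RatFunc.X + RatFunc.C θ) ^ (q ^ n))⁻¹) := by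
  subst hF
  obtain ⟨k, hk⟩ : ∃ k, Fintype.card F ^ n = k + 1 :=
    Nat.exists_eq_add_one.mpr (pow_pos Fintype.card_pos n)
  have hfrob (y : RatFunc F) (c : F) :
      (y + algebraMap F (RatFunc F) c) ^ (k + 1) = y ^ (k + 1) + algebraMap F (RatFunc F) c := by
    rw [← hk, add_algebraMap_pow_card_pow]
  rw [hk, Nat.add_sub_cancel, show 2 * (k + 1) - 1 = 2 * k + 1 by omega, ← RatFunc.algebraMap_eq_C]
  exact sum_inv_pow_succ_mul_sum_inv_pow
    (fun θ => by rw [RatFunc.algebraMap_eq_C]; exact RatFunc.X_add_C_ne_zero θ) hfrob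

/-- `S_1(q^n)·S_1(q^n - 1) = S_1(2q^n - 1) - S_1(q^n)` in `F_q(t)`. -/
theorem stmt_5 (p s q : ℕ) (hp : p.Prime) (hs : 0 < s) (hq : q = p ^ s)
    {F : Type} [Field F] [Fintype F] (hF : Fintype.card F = q)
    (n : ℕ) (hn : 1 ≤ n) :
    (∑ θ : F, ((RatFunc.X + RatFunc.C θ) ^ (q ^ n))⁻¹) *
        (∑ θ : F, ((RatFunc.X + RatFunc.C θ) ^ (q ^ n - 1))⁻¹) =
      (∑ θ : F, ((RatFunc.X + RatFunc.C θ) ^ (2 * q ^ n - 1))⁻¹) -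
        (∑ θ : F, ((RatFunc.X + RatFunc.C θ) ^ (q ^ n))⁻¹) :=
  stmt_5_general q hF n
end

section
/- Let q be a prime power and k a positive integer whose sum of base-q digits ℓ(k) satisfies ℓ(k) < q - 1. Then ∑_{θ∈F_q} (t+θ)^k = 0 in F_q[t]. -/
open Polynomial

/-!
Write `k = ∑ dᵢ qⁱ` in base `q`. Since `q = |F|`, Frobenius gives
`(t + θ)^(qⁱ) = t^(qⁱ) + θ` for `θ ∈ F`, so `(t + θ)^k = ∏ᵢ (t^(qⁱ) + θ)^(dᵢ)` is the value at `θ` of a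
polynomial in `θ` of degree `ℓ(k) < q - 1`; and power sums `∑_θ θ^j` vanish for `j < q - 1`.
-/

namespace FiniteField

variable {F : Type*} [Field F] [Fintype F]

theorem sum_eval_algebraMap_eq_zero {R : Type*} [CommRing R] [Algebra F R] {P : R[X]}
    (hP : P.natDegree < Fintype.card F - 1) : ∑ θ : F, P.eval (algebraMap F R θ) = 0 := by
  simp_rw [eval_eq_sum_range, ← map_pow]
  rw [Finset.sum_comm]
  refine Finset.sum_eq_zero fun j hj => ?_
  have hj : j < Fintype.card F - 1 := (Finset.mem_range_succ_iff.mp hj).trans_lt hP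
  rw [← Finset.mul_sum, ← map_sum, sum_pow_lt_card_sub_one F j hj, map_zero, mul_zero]

theorem add_C_pow_card (f : F[X]) (θ : F) :
    (f + C θ) ^ Fintype.card F = f ^ Fintype.card F + C θ := by
  rw [← expand_card, map_add, expand_C, expand_card]

theorem exists_natDegree_le_sum_eval_eq_add_C_pow_ofDigits (f : F[X]) (L : List ℕ) :
    ∃ P : F[X][X], P.natDegree ≤ L.sum ∧
      ∀ θ : F, P.eval (C θ) = (f + C θ) ^ Nat.ofDigits (Fintype.card F) L := by
  induction L generalizing f with
  | nil => exact ⟨1, by simp, by simp⟩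
  | cons d L ih =>
    obtain ⟨P, hdeg, heval⟩ := ih (f ^ Fintype.card F)
    refine ⟨(C f + X) ^ d * P, ?_, fun θ => ?_⟩
    · calc ((C f + X) ^ d * P).natDegree ≤ d * (C f + X).natDegree + P.natDegree :=
            natDegree_mul_le.trans (Nat.add_le_add_right natDegree_pow_le _)
        _ ≤ (d :: L).sum := by simp [hdeg]
    · rw [Nat.ofDigits_cons, pow_add, pow_mul, add_C_pow_card, ← heval]
      simp

end FiniteField

theorem stmt_14_general (q : ℕ)
    {F : Type} [Field F] [Fintype F] (hF : Fintype.card F = q)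
    (k : ℕ) (hdig : (Nat.digits q k).sum < q - 1) :
    (∑ θ : F, (X + C θ) ^ k) = (0 : F[X]) := by
  subst hF
  obtain ⟨P, hdeg, heval⟩ :=
    FiniteField.exists_natDegree_le_sum_eval_eq_add_C_pow_ofDigits (X : F[X])
      (Nat.digits (Fintype.card F) k)
  simp_rw [Nat.ofDigits_digits] at heval
  simp_rw [← heval]
  exact FiniteField.sum_eval_algebraMap_eq_zero (hdeg.trans_lt hdig)

/-- If the base-`q` digit sum of `k ≥ 1` is `< q-1`, then
`∑_{θ∈F_q} (t+θ)^k = 0` in `F_q[t]`. -/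
theorem stmt_14 (p s q : ℕ) (hp : p.Prime) (hs : 0 < s) (hq : q = p ^ s)
    {F : Type} [Field F] [Fintype F] (hF : Fintype.card F = q)
    (k : ℕ) (hk : 1 ≤ k) (hdig : (Nat.digits q k).sum < q - 1) :
    (∑ θ : F, (X + C θ) ^ k) = (0 : F[X]) :=
  stmt_14_general q hF k hdig
end

section
/- Let q be a prime power, b a positive integer, and l the unique nonnegative integer with l(q-1)+1 ≤ b ≤ (l+1)(q-1) (i.e., l = ⌈b/(q-1)⌉ - 1). For a monic degree-one n ∈ F_q[t], set P_n = ∑_{j=0}^{l-1}(j+2)n^{j(q-1)} + f_b·n^{b-(q-1)}, where f_b = b/(q-1) if (q-1) | b and f_b = 0 otherwise. Then n^2 - [1]^2 - n^{q-1}[1]^2 P_n = (l+2)n^{(l+1)(q-1)+2} - (l+1)n^{(l+2)(q-1)+2} - n^{q-1}[1]^2 f_b n^{b-(q-1)}, where [1] = t^q - t and the coefficients are in F_p. -/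
open Polynomial

lemma stmt_15_aux {R : Type*} [CommRing R] (l : ℕ) (m : R) :
    1 - (m - 1) ^ 2 - m * (m - 1) ^ 2 *
        ∑ j ∈ Finset.range l, ((j + 2 : ℕ) : R) * m ^ j =
      ((l + 2 : ℕ) : R) * m ^ (l + 1) - ((l + 1 : ℕ) : R) * m ^ (l + 2) := by
  induction l with
  | zero => simp; ring
  | succ l ih =>
    rw [Finset.sum_range_succ]
    push_cast at ih ⊢
    linear_combination ih

/-- With `[1] = t^q - t`, `n = t + θ` monic of degree one,
`l` the unique integer with `l(q-1)+1 ≤ b ≤ (l+1)(q-1)`,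
`f_b = b/(q-1)` if `(q-1) ∣ b` and `0` otherwise, and
`P_n = ∑_{j=0}^{l-1}(j+2)n^{j(q-1)} + f_b n^{b-(q-1)}`, one has
`n^2 - [1]^2 - n^{q-1}[1]^2 P_n
  = (l+2)n^{(l+1)(q-1)+2} - (l+1)n^{(l+2)(q-1)+2} - n^{q-1}[1]^2 f_b n^{b-(q-1)}`. -/
theorem stmt_15 (p s q : ℕ) (hp : p.Prime) (hs : 0 < s) (hq : q = p ^ s)
    {F : Type} [Field F] [Fintype F] (hF : Fintype.card F = q)
    (b l : ℕ) (hb : 1 ≤ b) (hl1 : l * (q - 1) + 1 ≤ b) (hl2 : b ≤ (l + 1) * (q - 1))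
    (θ : F) (n : F[X]) (hn : n = X + C θ)
    (br : F[X]) (hbr : br = X ^ q - X)
    (fb : F[X]) (hfb : fb = if (q - 1) ∣ b then ((b / (q - 1) : ℕ) : F[X]) else 0)
    (P : F[X])
    (hP : P = (∑ j ∈ Finset.range l, ((j + 2 : ℕ) : F[X]) * n ^ (j * (q - 1))) +
      fb * n ^ (b - (q - 1))) :
    n ^ 2 - br ^ 2 - n ^ (q - 1) * br ^ 2 * P =
      ((l + 2 : ℕ) : F[X]) * n ^ ((l + 1) * (q - 1) + 2) -
        ((l + 1 : ℕ) : F[X]) * n ^ ((l + 2) * (q - 1) + 2) -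
        n ^ (q - 1) * br ^ 2 * fb * n ^ (b - (q - 1)) := by
  have hq1 : 1 ≤ q := hq ▸ Nat.one_le_pow _ _ hp.pos
  haveI : Fact p.Prime := ⟨hp⟩
  -- the characteristic of F is p
  haveI hcharF : CharP F p := by
    have h1 : p ∣ ringChar F := (prime_dvd_char_iff_dvd_card p).mpr
      (by rw [hF, hq]; exact dvd_pow_self p hs.ne')
    have h2 : (ringChar F).Prime := CharP.char_is_prime F (ringChar F)
    have : ringChar F = p := ((Nat.prime_dvd_prime_iff_eq hp h2).mp h1).symm
    exact this ▸ ringChar.charP F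
  -- `br = n ^ q - n` via Frobenius
  have hbrn : br = n ^ q - n := by
    rw [hbr, hn, hq, add_pow_char_pow, ← hq]
    have : (C θ) ^ q = C θ := by
      rw [← C_pow, ← hF, FiniteField.pow_card]
    rw [this]
    ring
  -- `br ^ 2 = n ^ 2 * (n ^ (q-1) - 1) ^ 2`
  have hnq : n ^ q = n * n ^ (q - 1) := by
    rw [← pow_succ']
    congr 1
    omega
  have key : br ^ 2 = n ^ 2 * (n ^ (q - 1) - 1) ^ 2 := by
    rw [hbrn, hnq]; ring
  have hpm : ∀ j : ℕ, n ^ (j * (q - 1)) = (n ^ (q - 1)) ^ j := fun j => by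
    rw [← pow_mul, mul_comm]
  have e1 : n ^ ((l + 1) * (q - 1) + 2) = (n ^ (q - 1)) ^ (l + 1) * n ^ 2 := by
    rw [pow_add, ← pow_mul, mul_comm (q - 1)]
  have e2 : n ^ ((l + 2) * (q - 1) + 2) = (n ^ (q - 1)) ^ (l + 2) * n ^ 2 := by
    rw [pow_add, ← pow_mul, mul_comm (q - 1)]
  have H := stmt_15_aux l (n ^ (q - 1))
  rw [hP, key, e1, e2]
  simp only [hpm]
  push_cast at H ⊢
  linear_combination (n ^ 2) * H
end

section
/- Let q = 2 and A = F_2[t]. With S_1(k) = 1/t^k + 1/(t+1)^k and Δ(a,b) = S_1(a)S_1(b) - S_1(a+b), one has for all b ∈ Z_+: Δ(3, b+4) - Δ(3, b) = S_1(b+4) + S_1(b+3). -/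
/-!
Write `u = 1/t` and `v = 1/(t+1)`, so that `S_1(k) = u^k + v^k` and, in characteristic `2`,
`u + v = u v`, i.e. `u (1 + v) = v` and `v (1 + u) = u`. Expanding the product gives
`Δ(3, k) = u^3 v^k + u^k v^3`. Since `v^4 - 1 = (1 + v)^4` in characteristic `2`,
`u^3 v^b (v^4 - 1) = v^b (u (1 + v))^3 (1 + v) = v^(b+3) + v^(b+4)`, and symmetrically with
`u` and `v` swapped; the two halves add up to `S_1(b+4) + S_1(b+3)`.
-/

section PowerSums

variable {R : Type*} [CommRing R]

theorem pow_add_pow_mul_pow_add_pow_sub (u v : R) (a k : ℕ) :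
    (u ^ a + v ^ a) * (u ^ k + v ^ k) - (u ^ (a + k) + v ^ (a + k)) =
      u ^ a * v ^ k + u ^ k * v ^ a := by
  ring

variable [CharP R 2] {u v : R}

theorem mul_one_add_eq_of_add_eq_mul (h : u + v = u * v) : u * (1 + v) = v := by
  linear_combination -h + u * (CharTwo.two_eq_zero : (2 : R) = 0)

theorem pow_three_mul_pow_add_four_sub (h : u + v = u * v) (b : ℕ) :
    u ^ 3 * v ^ (b + 4) - u ^ 3 * v ^ b = v ^ (b + 3) + v ^ (b + 4) := by
  have hv : u * (1 + v) = v := mul_one_add_eq_of_add_eq_mul h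
  have key : u ^ 3 * (1 + v) ^ 4 = v ^ 3 * (1 + v) :=
    calc u ^ 3 * (1 + v) ^ 4 = (u * (1 + v)) ^ 3 * (1 + v) := by ring
      _ = v ^ 3 * (1 + v) := by rw [hv]
  linear_combination v ^ b * key -
    u ^ 3 * v ^ b * (1 + 2 * v + 3 * v ^ 2 + 2 * v ^ 3) * (CharTwo.two_eq_zero : (2 : R) = 0)

theorem delta_three_add_four_sub_delta_three (h : u + v = u * v) {s : ℕ → R}
    (hs : ∀ k, s k = u ^ k + v ^ k) (b : ℕ) :
    s 3 * s (b + 4) - s (3 + (b + 4)) - (s 3 * s b - s (3 + b)) = s (b + 4) + s (b + 3) := by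
  have hv := pow_three_mul_pow_add_four_sub h b
  have hu := pow_three_mul_pow_add_four_sub (by rw [add_comm, mul_comm, h] : v + u = v * u) b
  simp only [hs, pow_add_pow_mul_pow_add_pow_sub]
  linear_combination hv + hu

end PowerSums

theorem inv_add_inv_add_one_eq_mul {K : Type*} [Field K] [CharP K 2] {x : K} (hx : x ≠ 0)
    (hx' : x + 1 ≠ 0) : x⁻¹ + (x + 1)⁻¹ = x⁻¹ * (x + 1)⁻¹ := by
  field_simp
  linear_combination x * (CharTwo.two_eq_zero : (2 : K) = 0)

theorem RatFunc.X_add_one_ne_zero {F : Type*} [Field F] : (RatFunc.X + 1 : RatFunc F) ≠ 0 := by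
  rw [← RatFunc.algebraMap_X, ← map_one (algebraMap (Polynomial F) _), ← map_add]
  exact RatFunc.algebraMap_ne_zero (Polynomial.X_add_C_ne_zero 1)

theorem stmt_16_general
    (S1 : ℕ → RatFunc (ZMod 2))
    (hS1 : ∀ k, S1 k = (RatFunc.X ^ k)⁻¹ + ((RatFunc.X + 1) ^ k)⁻¹)
    (Δ : ℕ → ℕ → RatFunc (ZMod 2))
    (hΔ : ∀ a b, Δ a b = S1 a * S1 b - S1 (a + b))
    (b : ℕ) :
    Δ 3 (b + 4) - Δ 3 b = S1 (b + 4) + S1 (b + 3) := by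
  have h := inv_add_inv_add_one_eq_mul (K := RatFunc (ZMod 2)) RatFunc.X_ne_zero
    RatFunc.X_add_one_ne_zero
  simp only [hΔ]
  exact delta_three_add_four_sub_delta_three h (fun k ↦ by rw [hS1, inv_pow, inv_pow]) b

/-- For `q = 2`, `S_1(k) = 1/t^k + 1/(t+1)^k` and
`Δ(a,b) = S_1(a)S_1(b) - S_1(a+b)`, one has
`Δ(3, b+4) - Δ(3, b) = S_1(b+4) + S_1(b+3)` for all `b ≥ 1`. -/
theorem stmt_16
    (S1 : ℕ → RatFunc (ZMod 2))
    (hS1 : ∀ k, S1 k = (RatFunc.X ^ k)⁻¹ + ((RatFunc.X + 1) ^ k)⁻¹)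
    (Δ : ℕ → ℕ → RatFunc (ZMod 2))
    (hΔ : ∀ a b, Δ a b = S1 a * S1 b - S1 (a + b))
    (b : ℕ) (hb : 1 ≤ b) :
    Δ 3 (b + 4) - Δ 3 b = S1 (b + 4) + S1 (b + 3) :=
  stmt_16_general S1 hS1 Δ hΔ b
end
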